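/- Let G be a finite p-group with center Z, and suppose G is non-abelian. Then the number of maximal abelian subgroups of G is congruent modulo p to the number of subgroups of order p in the quotient group G/Z. -/

import Mathlib

/-!
Both sides are `≡ 1 [MOD p]`.

For the subgroups of order `p` of a nontrivial `p`-group `H`: the solutions of `x ^ p = 1` are `1`
and the `p - 1` generators of each subgroup of order `p`. Conjugation permutes these solutions, so
modulo `p` their number is that of the central ones, which form a nontrivial group of exponent `p`;
hence it is divisible by `p`.

For the maximal abelian subgroups, induct on `|G|` and double count the pairs `(A, K)` with `A`
maximal abelian and `K ≤ A / Z` of order `p`. For fixed `A`, `A / Z` is a nontrivial `p`-group.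
For fixed `K`, its preimage `T` is abelian (`T / Z` is cyclic), and the maximal abelian subgroups
containing `T` are exactly those of the proper subgroup `C_G(T)`.
-/

open Subgroup MulAction

theorem Nat.card_subtype_prod_modEq_card {α β : Type*} [Finite α] {n : ℕ} (r : α → β → Prop)
    [∀ a, Finite {b // r a b}] (h : ∀ a, Nat.card {b // r a b} ≡ 1 [MOD n]) :
    Nat.card {x : α × β // r x.1 x.2} ≡ Nat.card α [MOD n] := by
  have := Fintype.ofFinite α
  calc Nat.card {x : α × β // r x.1 x.2} = ∑ a, Nat.card {b // r a b} := by
        rw [Nat.card_congr (Equiv.subtypeProdEquivSigmaSubtype r), Nat.card_sigma]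
    _ ≡ ∑ _a : α, 1 [MOD n] := Nat.ModEq.sum fun a _ => h a
    _ = Nat.card α := by simp

theorem Nat.card_modEq_card_of_fibers_modEq_one {α β : Type*} [Finite α] [Finite β] {n : ℕ}
    (r : α → β → Prop) (hα : ∀ a, Nat.card {b // r a b} ≡ 1 [MOD n])
    (hβ : ∀ b, Nat.card {a // r a b} ≡ 1 [MOD n]) : Nat.card α ≡ Nat.card β [MOD n] :=
  calc Nat.card α ≡ Nat.card {x : α × β // r x.1 x.2} [MOD n] :=
        (Nat.card_subtype_prod_modEq_card r hα).symm
    _ = Nat.card {x : β × α // r x.2 x.1} :=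
        Nat.card_congr ((Equiv.prodComm α β).subtypeEquiv fun _ => Iff.rfl)
    _ ≡ Nat.card β [MOD n] := Nat.card_subtype_prod_modEq_card (fun b a => r a b) hβ

theorem Nat.modEq_one_of_dvd_pred_mul_add_one {p N : ℕ} (hp : p.Prime)
    (h : p ∣ (p - 1) * N + 1) : N ≡ 1 [MOD p] := by
  rw [← ZMod.natCast_eq_natCast_iff]
  have hp1 : ((p - 1 : ℕ) : ZMod p) = -1 := by
    rw [Nat.cast_sub hp.one_le, ZMod.natCast_self]; ring
  have := (ZMod.natCast_eq_zero_iff _ p).mpr h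
  push_cast [hp1] at this ⊢
  linear_combination -this

section PowEqOne

variable {H : Type*} [Group H] {p : ℕ} [Fact p.Prime]

theorem orderOf_eq_prime_and_zpowers_eq_iff {K : Subgroup H} [Finite K] (hK : Nat.card K = p)
    {x : H} : orderOf x = p ∧ zpowers x = K ↔ x ∈ K ∧ x ≠ 1 := by
  constructor
  · rintro ⟨hx, rfl⟩
    exact ⟨mem_zpowers x, (orderOf_eq_prime_iff.mp hx).2⟩
  · rintro ⟨hxK, hx1⟩
    have hx : orderOf x = p :=
      ((Nat.dvd_prime Fact.out).mp (hK ▸ K.orderOf_dvd_natCard hxK)).resolve_left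
        (mt orderOf_eq_one_iff.mp hx1)
    refine ⟨hx, eq_of_le_of_card_ge (zpowers_le.mpr hxK) ?_⟩
    rw [hK, Nat.card_zpowers, hx]

theorem card_orderOf_eq_prime [Finite H] :
    Nat.card {x : H // orderOf x = p} = (p - 1) * Nat.card {K : Subgroup H // Nat.card K = p} := by
  have := Fintype.ofFinite {K : Subgroup H // Nat.card K = p}
  let f : {x : H // orderOf x = p} → {K : Subgroup H // Nat.card K = p} :=
    fun x => ⟨zpowers x, by rw [Nat.card_zpowers, x.2]⟩
  have hfiber : ∀ K, Nat.card {x // f x = K} = p - 1 := by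
    rintro ⟨K, hK⟩
    calc Nat.card {x // f x = ⟨K, hK⟩}
        = Nat.card {x : H // x ∈ K ∧ x ≠ 1} := Nat.card_congr <|
          ((Equiv.subtypeEquivRight fun _ => Subtype.ext_iff).trans
            (Equiv.subtypeSubtypeEquivSubtypeInter _ fun x => zpowers x = K)).trans
            (Equiv.subtypeEquivRight fun _ => orderOf_eq_prime_and_zpowers_eq_iff hK)
      _ = ((K : Set H) \ {1}).ncard := rfl
      _ = p - 1 := by
        rw [Set.ncard_sdiff_singleton_of_mem K.one_mem, ← Nat.card_coe_set_eq,
          SetLike.coe_sort_coe, hK]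
  rw [← Nat.card_congr (Equiv.sigmaFiberEquiv f), Nat.card_sigma]
  simp [hfiber, mul_comm]

theorem card_pow_prime_eq_one [Finite H] :
    Nat.card {x : H // x ^ p = 1} =
      (p - 1) * Nat.card {K : Subgroup H // Nat.card K = p} + 1 := by
  have hset : {x : H | x ^ p = 1} = insert 1 {x | orderOf x = p} := by
    ext x
    by_cases hx : x = 1 <;> simp [orderOf_eq_prime_iff, hx]
  have h1 : (1 : H) ∉ {x | orderOf x = p} := by
    simpa using (Fact.out : p.Prime).one_lt.ne
  calc Nat.card {x : H // x ^ p = 1} = {x : H | x ^ p = 1}.ncard := rfl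
    _ = _ := by rw [hset, Set.ncard_insert_of_notMem h1, ← card_orderOf_eq_prime]; rfl

theorem CommGroup.prime_dvd_card_pow_eq_one {A : Type*} [CommGroup A] [Finite A]
    (hA : p ∣ Nat.card A) : p ∣ Nat.card {x : A // x ^ p = 1} := by
  set Ω := (powMonoidHom p : A →* A).ker
  have hΩ : IsPGroup p Ω := fun x => ⟨1, by rw [pow_one]; exact Subtype.ext x.2⟩
  obtain ⟨x, hx⟩ := exists_prime_orderOf_dvd_card' p hA
  have : Nontrivial Ω := (nontrivial_iff_ne_bot Ω).mpr fun h => by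
    have hxΩ : x ∈ Ω := by simp [Ω, ← hx, pow_orderOf_eq_one]
    rw [h, mem_bot] at hxΩ
    simp [hxΩ, (Fact.out : p.Prime).ne_one.symm] at hx
  exact (hΩ.card_eq_or_dvd.resolve_left Finite.one_lt_card.ne').trans
    (Nat.card_congr (Equiv.subtypeEquivRight fun _ => by simp [Ω])).dvd

variable (M : Type*) [Monoid M] [MulDistribMulAction M H] (n : ℕ)

def powEqOneSubMulAction : SubMulAction M H where
  carrier := {x | x ^ n = 1}
  smul_mem' g x (hx : x ^ n = 1) := by
    change (g • x) ^ n = 1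
    rw [← smul_pow', hx, smul_one]

variable {M n}

theorem mem_fixedPoints_conjAct_powEqOneSubMulAction_iff
    {x : powEqOneSubMulAction (ConjAct H) n} :
    x ∈ fixedPoints (ConjAct H) (powEqOneSubMulAction (ConjAct H) n) ↔ x.1 ∈ center H := by
  rw [← SetLike.mem_coe, ← ConjAct.fixedPoints_eq_center]
  simp only [mem_fixedPoints, Subtype.ext_iff, SubMulAction.val_smul]

open scoped IsMulCommutative in
theorem IsPGroup.prime_dvd_card_pow_eq_one [Finite H] [Nontrivial H] (hH : IsPGroup p H) :
    p ∣ Nat.card {x : H // x ^ p = 1} := by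
  let S := powEqOneSubMulAction (ConjAct H) (H := H) p
  have hfix : Nat.card (fixedPoints (ConjAct H) S) = Nat.card {z : center H // z ^ p = 1} :=
    Nat.card_congr <|
      calc fixedPoints (ConjAct H) S
          ≃ {x : H // x ^ p = 1 ∧ x ∈ center H} :=
            (Equiv.subtypeEquivRight fun _ => mem_fixedPoints_conjAct_powEqOneSubMulAction_iff).trans
              (Equiv.subtypeSubtypeEquivSubtypeInter (· ∈ S) (· ∈ center H))
        _ ≃ {x : H // x ∈ center H ∧ x ^ p = 1} := Equiv.subtypeEquivRight fun _ => and_comm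
        _ ≃ {z : center H // z ^ p = 1} :=
            (Equiv.subtypeSubtypeEquivSubtypeInter (· ∈ center H) fun x => x ^ p = 1).symm.trans
              (Equiv.subtypeEquivRight fun _ => by
                rw [← OneMemClass.coe_eq_one, SubmonoidClass.coe_pow])
  have hZ : p ∣ Nat.card (center H) :=
    have := hH.center_nontrivial
    (hH.to_subgroup _).card_eq_or_dvd.resolve_left Finite.one_lt_card.ne'
  have hmod := (hH.of_equiv ConjAct.toConjAct).card_modEq_card_fixedPoints S
  rw [hfix] at hmod
  exact Nat.modEq_zero_iff_dvd.mp
    (hmod.trans (Nat.modEq_zero_iff_dvd.mpr (CommGroup.prime_dvd_card_pow_eq_one hZ)))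

theorem IsPGroup.card_subgroup_card_eq_prime_modEq_one [Finite H] [Nontrivial H]
    (hH : IsPGroup p H) : Nat.card {K : Subgroup H // Nat.card K = p} ≡ 1 [MOD p] :=
  Nat.modEq_one_of_dvd_pred_mul_add_one Fact.out
    (card_pow_prime_eq_one (H := H) (p := p) ▸ hH.prime_dvd_card_pow_eq_one)

end PowEqOne

namespace Subgroup

variable {G : Type*} [Group G]

theorem card_subgroups_card_eq_le (H : Subgroup G) (n : ℕ) :
    Nat.card {K : Subgroup G // Nat.card K = n ∧ K ≤ H} =
      Nat.card {K : Subgroup H // Nat.card K = n} :=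
  Nat.card_congr <| (Equiv.subtypeEquivRight fun _ => and_comm).trans <|
    (Equiv.subtypeSubtypeEquivSubtypeInter (· ≤ H) fun K => Nat.card K = n).symm.trans <|
    ((MapSubtype.orderIso H).toEquiv.subtypeEquiv fun K => by
      rw [← card_map_of_injective H.subtype_injective]; rfl).symm

theorem maximal_isMulCommutative_iff_centralizer_eq {A : Subgroup G} :
    Maximal (fun H : Subgroup G => IsMulCommutative H) A ↔ centralizer (A : Set G) = A := by
  refine ⟨fun hA => ?_, fun hA => ?_⟩
  · have := hA.1
    refine le_antisymm (fun x hx => ?_) (le_centralizer A)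
    have hsup : IsMulCommutative ↥(A ⊔ zpowers x) := by
      rw [← le_centralizer_iff_isMulCommutative]
      -- `A` and `zpowers x` each centralize both of them.
      refine sup_le ?_ ?_ <;> rw [le_centralizer_iff] <;> refine sup_le ?_ ?_
      · exact le_centralizer A
      · exact zpowers_le.mpr hx
      · exact le_centralizer_iff.mp (zpowers_le.mpr hx)
      · exact le_centralizer _
    exact hA.2 hsup le_sup_left (le_sup_right (a := A) (mem_zpowers x))
  · refine ⟨le_centralizer_iff_isMulCommutative.mp hA.ge, fun B hB hAB => ?_⟩
    have := hB
    exact hA ▸ (le_centralizer B).trans (centralizer_le hAB)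

theorem center_le_of_maximal_isMulCommutative {A : Subgroup G}
    (hA : Maximal (fun H : Subgroup G => IsMulCommutative H) A) : center G ≤ A :=
  (center_le_centralizer A).trans (maximal_isMulCommutative_iff_centralizer_eq.mp hA).le

theorem maximal_isMulCommutative_iff_eq_top [IsMulCommutative G] {A : Subgroup G} :
    Maximal (fun H : Subgroup G => IsMulCommutative H) A ↔ A = ⊤ := by
  rw [maximal_isMulCommutative_iff_centralizer_eq, centralizer_eq_top_iff_subset.mpr
    (by rw [center_eq_top]; exact Set.subset_univ _), eq_comm]

theorem not_le_center_of_maximal_isMulCommutative (hG : ¬ IsMulCommutative G) {A : Subgroup G}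
    (hA : Maximal (fun H : Subgroup G => IsMulCommutative H) A) : ¬ A ≤ center G := fun h => by
  have hA' := maximal_isMulCommutative_iff_centralizer_eq.mp hA
  rw [centralizer_eq_top_iff_subset.mpr h] at hA'
  exact hG (center_eq_top_iff.mp (top_le_iff.mp (hA' ▸ h)))

theorem centralizer_subgroupOf {A C : Subgroup G} (hAC : A ≤ C) :
    centralizer (A.subgroupOf C : Set C) = (centralizer (A : Set G)).subgroupOf C := by
  ext x
  simp only [mem_centralizer_iff, mem_subgroupOf, SetLike.mem_coe, Subtype.forall,
    Subtype.ext_iff, coe_mul]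
  exact ⟨fun h g hg => h g (hAC hg) hg, fun h g _ hg => h g hg⟩

theorem maximal_isMulCommutative_subgroupOf_centralizer_iff {T A : Subgroup G} (hTA : T ≤ A)
    (hAC : A ≤ centralizer (T : Set G)) :
    Maximal (fun H : Subgroup (centralizer (T : Set G)) => IsMulCommutative H)
      (A.subgroupOf (centralizer T)) ↔ Maximal (fun H : Subgroup G => IsMulCommutative H) A := by
  rw [maximal_isMulCommutative_iff_centralizer_eq, maximal_isMulCommutative_iff_centralizer_eq,
    centralizer_subgroupOf hAC, subgroupOf_inj, inf_eq_left.mpr hAC,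
    inf_eq_left.mpr (centralizer_le hTA)]

theorem subgroupOf_centralizer_le_center (T : Subgroup G) :
    T.subgroupOf (centralizer (T : Set G)) ≤ center (centralizer (T : Set G)) :=
  fun t ht => mem_center_iff.mpr fun c => Subtype.ext (c.2 t ht).symm

theorem card_maximal_isMulCommutative_ge_eq_centralizer (T : Subgroup G) [IsMulCommutative T] :
    Nat.card {A : Subgroup G // Maximal (fun H : Subgroup G => IsMulCommutative H) A ∧ T ≤ A} =
      Nat.card {B : Subgroup (centralizer (T : Set G)) //
        Maximal (fun H : Subgroup (centralizer (T : Set G)) => IsMulCommutative H) B} := by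
  set C := centralizer (T : Set G)
  have hAC {A : Subgroup G} (hA : Maximal (fun H : Subgroup G => IsMulCommutative H) A)
      (hTA : T ≤ A) : A ≤ C :=
    (maximal_isMulCommutative_iff_centralizer_eq.mp hA).ge.trans (centralizer_le hTA)
  have hTB {B : Subgroup C} (hB : Maximal (fun H : Subgroup C => IsMulCommutative H) B) :
      T ≤ B.map C.subtype := by
    rw [← map_subgroupOf_eq_of_le (le_centralizer T)]
    exact map_mono ((subgroupOf_centralizer_le_center T).trans
      (center_le_of_maximal_isMulCommutative hB))
  exact Nat.card_congr
    { toFun A := ⟨A.1.subgroupOf C,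
        (maximal_isMulCommutative_subgroupOf_centralizer_iff A.2.2 (hAC A.2.1 A.2.2)).mpr A.2.1⟩
      invFun B := ⟨B.1.map C.subtype,
        (maximal_isMulCommutative_subgroupOf_centralizer_iff (hTB B.2) (map_subtype_le B.1)).mp
          (by rw [subgroupOf, comap_map_eq_self_of_injective C.subtype_injective]; exact B.2),
        hTB B.2⟩
      left_inv A := Subtype.ext (map_subgroupOf_eq_of_le (hAC A.2.1 A.2.2))
      right_inv B := Subtype.ext (comap_map_eq_self_of_injective C.subtype_injective B.1) }

end Subgroup

namespace QuotientGroup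

variable {G : Type*} [Group G]

theorem le_map_mk'_iff_comap_le {N : Subgroup G} [N.Normal] {K : Subgroup (G ⧸ N)}
    {A : Subgroup G} (hNA : N ≤ A) : K ≤ A.map (mk' N) ↔ K.comap (mk' N) ≤ A := by
  rw [← comap_le_comap_of_surjective (mk'_surjective N), comap_map_mk', sup_eq_right.mpr hNA]

theorem isMulCommutative_comap_mk'_center {K : Subgroup (G ⧸ center G)} [IsCyclic K] :
    IsMulCommutative (K.comap (mk' (center G))) := by
  refine ((mk' (center G)).subgroupComap K).isMulCommutative_of_isCyclic_of_ker_le_center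
    fun t ht => mem_center_iff.mpr fun s => Subtype.ext ?_
  have ht : (t : G) ∈ center G := by
    rw [MonoidHom.mem_ker, Subtype.ext_iff] at ht
    exact (eq_one_iff _).mp ht
  exact mem_center_iff.mp ht s

end QuotientGroup

open QuotientGroup in
theorem IsPGroup.card_maximal_isMulCommutative_modEq_one {p : ℕ} [Fact p.Prime] {G : Type*}
    [Group G] [Finite G] (hG : IsPGroup p G) :
    Nat.card {A : Subgroup G // Maximal (fun H : Subgroup G => IsMulCommutative H) A} ≡ 1 [MOD p] := by
  induction hn : Nat.card G using Nat.strong_induction_on generalizing G with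
  | _ n ih =>
  by_cases hcomm : IsMulCommutative G
  · simp only [maximal_isMulCommutative_iff_eq_top, Nat.card_unique, Nat.ModEq.refl]
  have := QuotientGroup.nontrivial_iff.mpr (mt center_eq_top_iff.mp hcomm)
  refine (Nat.card_modEq_card_of_fibers_modEq_one
    (fun A (K : {K : Subgroup (G ⧸ center G) // Nat.card K = p}) =>
      K.1 ≤ A.1.map (mk' (center G))) ?_ ?_).trans
    (hG.to_quotient _).card_subgroup_card_eq_prime_modEq_one
  · rintro ⟨A, hA⟩
    have : Nontrivial (A.map (mk' (center G))) := (nontrivial_iff_ne_bot _).mpr <| by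
      rw [Ne, Subgroup.map_eq_bot_iff, ker_mk']
      exact not_le_center_of_maximal_isMulCommutative hcomm hA
    rw [Nat.card_congr (Equiv.subtypeSubtypeEquivSubtypeInter (fun K : Subgroup (G ⧸ center G) =>
      Nat.card K = p) (· ≤ A.map (mk' (center G)))), card_subgroups_card_eq_le]
    exact ((hG.to_quotient _).to_subgroup _).card_subgroup_card_eq_prime_modEq_one
  · rintro ⟨K, hK⟩
    have : IsCyclic K := isCyclic_of_prime_card hK
    set T := K.comap (mk' (center G))
    have : IsMulCommutative T := isMulCommutative_comap_mk'_center
    have hT : ¬ T ≤ center G := fun h => by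
      have := (le_map_mk'_iff_comap_le le_rfl).mpr h
      rw [map_mk'_self, le_bot_iff] at this
      simp [this, (Fact.out : p.Prime).ne_one.symm] at hK
    have hcard : Nat.card (centralizer (T : Set G)) < n := hn ▸ lt_of_le_of_ne
      (card_le_card_group _) (mt (card_eq_iff_eq_top _).mp (mt centralizer_eq_top_iff_subset.mp hT))
    calc Nat.card {A : {A : Subgroup G // Maximal (fun H : Subgroup G => IsMulCommutative H) A} //
          K ≤ A.1.map (mk' (center G))}
        = Nat.card {A : Subgroup G // Maximal (fun H : Subgroup G => IsMulCommutative H) A ∧ T ≤ A} :=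
          Nat.card_congr <| (Equiv.subtypeSubtypeEquivSubtypeInter _ _).trans <|
            Equiv.subtypeEquivRight fun A => and_congr_right fun hA =>
              le_map_mk'_iff_comap_le (center_le_of_maximal_isMulCommutative hA)
      _ = _ := card_maximal_isMulCommutative_ge_eq_centralizer T
      _ ≡ 1 [MOD p] := ih _ hcard (hG.to_subgroup _) rfl

theorem maximal_abelian_count_congr_order_p_in_central_quotient {p : ℕ} (hp : p.Prime)
    {G : Type*} [Group G] [Finite G] (hG : IsPGroup p G)
    (h : ¬ ∀ a b : G, a * b = b * a) :
    Nat.card {A : Subgroup G // Maximal (fun H : Subgroup G => IsMulCommutative H) A} ≡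
      Nat.card {K : Subgroup (G ⧸ Subgroup.center G) // Nat.card K = p} [MOD p] := by
  have := Fact.mk hp
  have := QuotientGroup.nontrivial_iff.mpr (mt center_eq_top_iff.mp (mt isMulCommutative_iff.mp h))
  exact hG.card_maximal_isMulCommutative_modEq_one.trans
    (hG.to_quotient _).card_subgroup_card_eq_prime_modEq_one.symm
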